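/- arXiv:2506.09261 — 8 statements merged into one kernel-verified Lean document; each statement's English description precedes it below -/
import Mathlib

section
/- Let (X,d) be a compact metric space and f : X → X an arbitrary (not necessarily continuous) self-map. Then there exists a point x ∈ X that is chain-recurrent, i.e., for every ε > 0 there exist n ≥ 1 and points x₀, x₁, …, xₙ with x₀ = xₙ = x and d(f(xᵢ), xᵢ₊₁) < ε for all i = 0, …, n−1. -/
open Filter Topology Set

variable {X : Type*}

section Defs
variable [PseudoMetricSpace X]

def IsEpsChain (f : X → X) (ε : ℝ) (n : ℕ) (c : ℕ → X) (x y : X) : Prop :=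
  1 ≤ n ∧ c 0 = x ∧ c n = y ∧ ∀ i < n, dist (f (c i)) (c (i + 1)) < ε

def EpsChain (f : X → X) (ε : ℝ) (x y : X) : Prop :=
  ∃ n c, IsEpsChain f ε n c x y

/-- The chain relation `x 𝒞 y`. -/
def ChainRel (f : X → X) (x y : X) : Prop :=
  ∀ ε > 0, EpsChain f ε x y

def EpsChainIn (f : X → X) (S : Set X) (ε : ℝ) (x y : X) : Prop :=
  ∃ n c, IsEpsChain f ε n c x y ∧ ∀ i ≤ n, c i ∈ S

def ChainRelIn (f : X → X) (S : Set X) (x y : X) : Prop :=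
  ∀ ε > 0, EpsChainIn f S ε x y

def InternallyChainTransitive (f : X → X) (S : Set X) : Prop :=
  ∀ x ∈ S, ∀ y ∈ S, ∀ ε > 0, EpsChainIn f S ε x y

/-- The nested-chain relation `x 𝒞⊆ y`. -/
def NestedChainRel (f : X → X) (x y : X) : Prop :=
  ∃ ε : ℕ → ℝ, (∀ n, 0 < ε n) ∧ Antitone ε ∧ Tendsto ε atTop (𝓝 0) ∧
    ∃ N : ℕ → ℕ, ∃ c : ℕ → ℕ → X,
      (∀ n, IsEpsChain f (ε n) (N n) (c n) x y) ∧
      ∀ n, c n '' Set.Iic (N n) ⊆ c (n + 1) '' Set.Iic (N (n + 1))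

/-- The nested-chain relation with all chain points inside `S`. -/
def NestedChainRelIn (f : X → X) (S : Set X) (x y : X) : Prop :=
  ∃ ε : ℕ → ℝ, (∀ n, 0 < ε n) ∧ Antitone ε ∧ Tendsto ε atTop (𝓝 0) ∧
    ∃ N : ℕ → ℕ, ∃ c : ℕ → ℕ → X,
      (∀ n, IsEpsChain f (ε n) (N n) (c n) x y ∧ ∀ i ≤ N n, c n i ∈ S) ∧
      ∀ n, c n '' Set.Iic (N n) ⊆ c (n + 1) '' Set.Iic (N (n + 1))

end Defs

/-- Strong `(ε,d)`-chain for an explicitly given distance function `d`. -/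
def StrongEpsChainWith (d : X → X → ℝ) (f : X → X) (ε : ℝ) (x y : X) : Prop :=
  ∃ n, 1 ≤ n ∧ ∃ c : ℕ → X, c 0 = x ∧ c n = y ∧
    (∑ i ∈ Finset.range n, d (f (c i)) (c (i + 1))) < ε

/-- The strong chain relation `x 𝒮𝒞_d y`. -/
def StrongChainRelWith (d : X → X → ℝ) (f : X → X) (x y : X) : Prop :=
  ∀ ε > 0, StrongEpsChainWith d f ε x y

/-!
For each `x` the set `Ω x = {y | x 𝒞 y}` of points chain-reachable from `x` is closed, contains
`f x`, and `Ω y ⊆ Ω x` whenever `y ∈ Ω x` (chains concatenate). By compactness and Zorn's lemma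
some `Ω x₀` is minimal among these sets. For `y ∈ Ω x₀` we get `Ω y ⊆ Ω x₀`, hence
`Ω y = Ω x₀ ∋ y`, so `y` is chain-recurrent. Continuity of `f` is never needed: closedness of
`Ω x` only moves the last point of a chain.
-/

section ClosedTransitive

variable [TopologicalSpace X]

theorem exists_minimal_setOf_rel [CompactSpace X] [Nonempty X] {R : X → X → Prop}
    (htrans : ∀ {x y z}, R x y → R y z → R x z) (hne : ∀ x, ∃ y, R x y)
    (hclosed : ∀ x, IsClosed {y | R x y}) :
    ∃ m, Minimal (· ∈ range fun x => {y | R x y}) m := by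
  apply zorn_superset
  intro c hcS hchain
  rcases c.eq_empty_or_nonempty with rfl | hc
  · exact ⟨_, mem_range_self (Classical.arbitrary X), by simp⟩
  have : Nonempty c := hc.to_subtype
  obtain ⟨z, hz⟩ : (⋂₀ c).Nonempty := by
    refine IsCompact.nonempty_sInter_of_directed_nonempty_isCompact_isClosed
      (fun s hs t ht => (hchain.total hs ht).elim (fun h => ⟨s, hs, subset_rfl, h⟩)
        fun h => ⟨t, ht, h, subset_rfl⟩) (fun s hs => ?_) (fun s hs => ?_) (fun s hs => ?_) <;>
    obtain ⟨a, rfl⟩ := hcS hs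
    exacts [hne a, (hclosed a).isCompact, hclosed a]
  refine ⟨_, mem_range_self z, fun s hs w hw => ?_⟩
  obtain ⟨a, rfl⟩ := hcS hs
  exact htrans (hz _ hs) hw

theorem exists_rel_self_of_transitive [CompactSpace X] [Nonempty X] {R : X → X → Prop}
    (htrans : ∀ {x y z}, R x y → R y z → R x z) (hne : ∀ x, ∃ y, R x y)
    (hclosed : ∀ x, IsClosed {y | R x y}) :
    ∃ x, R x x := by
  obtain ⟨_, ⟨x, rfl⟩, hmin⟩ := exists_minimal_setOf_rel (R := R) htrans hne hclosed
  obtain ⟨y, hxy⟩ := hne x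
  have hyx : {z | R y z} ⊆ {z | R x z} := fun z hyz => htrans hxy hyz
  exact ⟨y, hmin (mem_range_self y) hyx hxy⟩

end ClosedTransitive

section Chains

variable [PseudoMetricSpace X] {f : X → X} {ε δ : ℝ} {x y z : X}

theorem EpsChain.trans (hxy : EpsChain f ε x y) (hyz : EpsChain f ε y z) : EpsChain f ε x z := by
  obtain ⟨n, c, hn, hc0, hcn, hc⟩ := hxy
  obtain ⟨m, d, -, hd0, hdm, hd⟩ := hyz
  set e : ℕ → X := fun i => if i ≤ n then c i else d (i - n)
  have he_head : ∀ i ≤ n, e i = c i := fun i hi => if_pos hi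
  have he_tail : ∀ i, n ≤ i → e i = d (i - n) := by
    intro i hi
    rcases hi.eq_or_lt with rfl | hi
    · rw [he_head n le_rfl, Nat.sub_self, hcn, hd0]
    · exact if_neg (not_le.mpr hi)
  refine ⟨n + m, e, by omega, by rw [he_head 0 (Nat.zero_le _), hc0], ?_, fun i hi => ?_⟩
  · rw [he_tail _ (Nat.le_add_right n m), Nat.add_sub_cancel_left, hdm]
  rcases lt_or_ge i n with hin | hin
  · rw [he_head i hin.le, he_head (i + 1) hin]
    exact hc i hin
  · rw [he_tail i hin, he_tail (i + 1) (by omega), show i + 1 - n = i - n + 1 by omega]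
    exact hd (i - n) (by omega)

theorem ChainRel.trans (hxy : ChainRel f x y) (hyz : ChainRel f y z) : ChainRel f x z :=
  fun ε hε => (hxy ε hε).trans (hyz ε hε)

theorem chainRel_apply_self (f : X → X) (x : X) : ChainRel f x (f x) := by
  intro ε hε
  refine ⟨1, fun i => if i = 0 then x else f x, le_rfl, rfl, rfl, ?_⟩
  intro i hi
  obtain rfl : i = 0 := Nat.lt_one_iff.mp hi
  simpa using hε

theorem EpsChain.of_dist_lt (h : EpsChain f ε x y) (hyz : dist y z < δ) :
    EpsChain f (ε + δ) x z := by
  obtain ⟨n, c, hn, hc0, hcn, hc⟩ := h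
  have hδ : 0 < δ := dist_nonneg.trans_lt hyz
  refine ⟨n, Function.update c n z, hn, ?_, Function.update_self .., fun i hi => ?_⟩
  · rwa [Function.update_of_ne (by omega)]
  rw [Function.update_of_ne hi.ne]
  rcases eq_or_ne (i + 1) n with hin | hin
  · rw [hin, Function.update_self]
    calc dist (f (c i)) z ≤ dist (f (c i)) y + dist y z := dist_triangle _ _ _
      _ < ε + δ := add_lt_add (hcn ▸ hin ▸ hc i hi) hyz
  · rw [Function.update_of_ne hin]
    linarith [hc i hi]

theorem isClosed_setOf_chainRel (f : X → X) (x : X) : IsClosed {y | ChainRel f x y} := by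
  refine isClosed_of_closure_subset fun z hz ε hε => ?_
  obtain ⟨y, hxy, hyz⟩ := Metric.mem_closure_iff.mp hz (ε / 2) (half_pos hε)
  rw [← add_halves ε]
  exact (hxy (ε / 2) (half_pos hε)).of_dist_lt (dist_comm z y ▸ hyz)

end Chains

theorem stmt0 [MetricSpace X] [CompactSpace X] [Nonempty X] (f : X → X) :
    ∃ x : X, ChainRel f x x :=
  exists_rel_self_of_transitive ChainRel.trans (fun x => ⟨f x, chainRel_apply_self f x⟩)
    (isClosed_setOf_chainRel f)
end

section
/- Let (X,d) be a compact metric space and f : X → X an arbitrary self-map. Then there exists a point x ∈ X that is strong chain-recurrent with respect to d: for every ε > 0 there exist n ≥ 1 and points x₀, …, xₙ with x₀ = xₙ = x and Σᵢ₌₀^{n−1} d(f(xᵢ), xᵢ₊₁) < ε. -/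
open Filter Topology Set

variable {X : Type*}

/-!
The strong chain relation is transitive (concatenate chains), every `x` relates to `f x`, and
the set of points strongly chain-reachable from `x` is closed (moving the endpoint of a chain by
`δ` costs at most `δ` in the final jump); none of this needs continuity of `f`. In a compact
space, Zorn's lemma gives a minimal nonempty closed set `M` invariant under the relation. For
`a ∈ M`, the points reachable from `a` form such a set inside `M`, hence all of `M`, so `a` is
reachable from itself.
-/

theorem exists_minimal_nonempty_isClosed_invariant {α : Type*} [TopologicalSpace α]
    [CompactSpace α] [Nonempty α] (r : α → α → Prop) :
    ∃ M : Set α, Minimal (fun A => A.Nonempty ∧ IsClosed A ∧ ∀ a ∈ A, ∀ b, r a b → b ∈ A) M := by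
  obtain ⟨M, -, hM⟩ := zorn_superset_nonempty
    {A : Set α | A.Nonempty ∧ IsClosed A ∧ ∀ a ∈ A, ∀ b, r a b → b ∈ A}
    (fun c hc hchain hcne => by
      refine ⟨⋂₀ c, ⟨?_, isClosed_sInter fun A hA => (hc hA).2.1, ?_⟩,
        fun A hA => sInter_subset_of_mem hA⟩
      · have : Nonempty c := hcne.to_subtype
        exact IsCompact.nonempty_sInter_of_directed_nonempty_isCompact_isClosed
          (IsChain.directedOn hchain.symm) (fun A hA => (hc hA).1)
          (fun A hA => (hc hA).2.1.isCompact) (fun A hA => (hc hA).2.1)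
      · exact fun a ha b hab => mem_sInter.2 fun A hA => (hc hA).2.2 a (ha A hA) b hab)
    univ ⟨univ_nonempty, isClosed_univ, fun _ _ b _ => mem_univ b⟩
  exact ⟨M, hM⟩

theorem exists_rel_self_of_isClosed_setOf_rel {α : Type*} [TopologicalSpace α]
    [CompactSpace α] [Nonempty α] {r : α → α → Prop} (htrans : ∀ {a b c}, r a b → r b c → r a c)
    (hne : ∀ a, ∃ b, r a b) (hclosed : ∀ a, IsClosed {b | r a b}) : ∃ a, r a a := by
  obtain ⟨M, hM⟩ := exists_minimal_nonempty_isClosed_invariant r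
  obtain ⟨a, ha⟩ := hM.prop.1
  have hreach : {b | r a b} ⊆ M := fun b hb => hM.prop.2.2 a ha b hb
  have hreach_eq : {b | r a b} = M :=
    hM.eq_of_le ⟨hne a, hclosed a, fun b hb c hbc => htrans hb hbc⟩ hreach
  exact ⟨a, show a ∈ {b | r a b} from hreach_eq ▸ ha⟩

section StrongChain

variable [PseudoMetricSpace X] {f : X → X} {x y z : X} {ε δ : ℝ}

theorem StrongEpsChainWith.append (h₁ : StrongEpsChainWith dist f ε x y)
    (h₂ : StrongEpsChainWith dist f δ y z) : StrongEpsChainWith dist f (ε + δ) x z := by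
  obtain ⟨n, -, c, hc0, hcn, hc⟩ := h₁
  obtain ⟨m, hm, c', hc'0, hc'm, hc'⟩ := h₂
  set g : ℕ → X := fun i => if i ≤ n then c i else c' (i - n)
  have hg_left : ∀ i ≤ n, g i = c i := fun i hi => if_pos hi
  have hg_right : ∀ i, g (n + i) = c' i := by
    intro i
    rcases Nat.eq_zero_or_pos i with rfl | hi
    · simp [g, hcn, hc'0]
    · simp [g, show ¬n + i ≤ n by omega]
  refine ⟨n + m, by omega, g, by rw [hg_left 0 n.zero_le, hc0], by rw [hg_right, hc'm], ?_⟩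
  have hleft : ∑ i ∈ Finset.range n, dist (f (g i)) (g (i + 1))
      = ∑ i ∈ Finset.range n, dist (f (c i)) (c (i + 1)) :=
    Finset.sum_congr rfl fun i hi => by
      rw [hg_left i (Finset.mem_range.1 hi).le, hg_left (i + 1) (Finset.mem_range.1 hi)]
  have hright : ∑ i ∈ Finset.range m, dist (f (g (n + i))) (g (n + i + 1))
      = ∑ i ∈ Finset.range m, dist (f (c' i)) (c' (i + 1)) :=
    Finset.sum_congr rfl fun i _ => by rw [hg_right, add_assoc, hg_right]
  rw [Finset.sum_range_add, hleft, hright]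
  exact add_lt_add hc hc'

theorem StrongEpsChainWith.replace_endpoint (h : StrongEpsChainWith dist f ε x y) (hyz : dist y z < δ) :
    StrongEpsChainWith dist f (ε + δ) x z := by
  obtain ⟨n, hn, c, hc0, hcn, hc⟩ := h
  obtain ⟨m, rfl⟩ : ∃ m, n = m + 1 := ⟨n - 1, by omega⟩
  set c' := Function.update c (m + 1) z
  have hc'_of_ne : ∀ i ≠ m + 1, c' i = c i := fun i hi => Function.update_of_ne hi _ _
  have hc'_last : c' (m + 1) = z := Function.update_self _ _ _
  have hinit : ∑ i ∈ Finset.range m, dist (f (c' i)) (c' (i + 1))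
      = ∑ i ∈ Finset.range m, dist (f (c i)) (c (i + 1)) :=
    Finset.sum_congr rfl fun i hi => by
      have hi := Finset.mem_range.1 hi
      rw [hc'_of_ne i (by omega), hc'_of_ne (i + 1) (by omega)]
  have hlast : dist (f (c m)) z ≤ dist (f (c m)) (c (m + 1)) + dist y z :=
    hcn ▸ dist_triangle _ _ _
  refine ⟨m + 1, hn, c', by rw [hc'_of_ne 0 (by omega), hc0], hc'_last, ?_⟩
  rw [Finset.sum_range_succ] at hc ⊢
  rw [hinit, hc'_of_ne m (by omega), hc'_last]
  linarith

theorem strongChainRelWith_apply (f : X → X) (x : X) : StrongChainRelWith dist f x (f x) :=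
  fun ε hε => ⟨1, le_rfl, fun i => if i = 0 then x else f x, by simp, by simp, by simpa using hε⟩

theorem StrongChainRelWith.trans (h₁ : StrongChainRelWith dist f x y)
    (h₂ : StrongChainRelWith dist f y z) : StrongChainRelWith dist f x z := fun ε hε =>
  add_halves ε ▸ (h₁ (ε / 2) (half_pos hε)).append (h₂ (ε / 2) (half_pos hε))

theorem isClosed_setOf_strongChainRelWith (f : X → X) (x : X) :
    IsClosed {y | StrongChainRelWith dist f x y} := by
  refine closure_subset_iff_isClosed.1 fun z hz ε hε => ?_
  obtain ⟨y, hy, hyz⟩ := Metric.mem_closure_iff.1 hz (ε / 2) (half_pos hε)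
  exact add_halves ε ▸ (hy (ε / 2) (half_pos hε)).replace_endpoint (by rwa [dist_comm])

end StrongChain

theorem stmt2 [MetricSpace X] [CompactSpace X] [Nonempty X] (f : X → X) :
    ∃ x : X, StrongChainRelWith (fun a b => dist a b) f x x :=
  exists_rel_self_of_isClosed_setOf_rel StrongChainRelWith.trans
    (fun x => ⟨f x, strongChainRelWith_apply f x⟩) (isClosed_setOf_strongChainRelWith f)
end

section
/- Let (X,d) be a compact metric space and f : X → X an arbitrary self-map. Then X contains a nonempty closed f-invariant subset S that is internally chain transitive: for all x, y ∈ S and all ε > 0 there is an ε-chain from x to y all of whose points lie in S. -/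
open Filter Topology Set

variable {X : Type*}

/-! Zorn's lemma and compactness give a minimal nonempty closed invariant set `M`. For `x ∈ M`,
the points of `M` reachable from `x` by arbitrarily fine chains inside `M` again form a nonempty
closed invariant set: invariance by appending the step to `f y`, closedness by moving the last
point of a chain. Minimality forces this set to be all of `M`. No continuity of `f` is needed,
since closedness only ever perturbs the endpoint of a chain, never the image of a point. -/

section MinimalInvariant
variable [TopologicalSpace X] [CompactSpace X]

theorem exists_minimal_nonempty_isClosed_mapsTo [Nonempty X] (f : X → X) :
    ∃ M : Set X, Minimal (fun S => S.Nonempty ∧ IsClosed S ∧ MapsTo f S S) M := by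
  obtain ⟨M, -, hM⟩ := zorn_superset_nonempty {S : Set X | S.Nonempty ∧ IsClosed S ∧ MapsTo f S S}
    (fun c hc hchain hcne => by
      have : Nonempty c := hcne.to_subtype
      refine ⟨⋂₀ c, ⟨?_, isClosed_sInter fun U hU => (hc hU).2.1,
        fun x hx U hU => (hc hU).2.2 (hx U hU)⟩, fun _ => sInter_subset_of_mem⟩
      exact IsCompact.nonempty_sInter_of_directed_nonempty_isCompact_isClosed
        (IsChain.directedOn hchain.symm) (fun U hU => (hc hU).1)
        (fun U hU => (hc hU).2.1.isCompact) (fun U hU => (hc hU).2.1))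
    univ ⟨univ_nonempty, isClosed_univ, mapsTo_univ f _⟩
  exact ⟨M, hM⟩

end MinimalInvariant

section Chains
variable [PseudoMetricSpace X] {f : X → X} {S : Set X} {ε δ η : ℝ} {x y z : X}

theorem EpsChainIn.mem_right (h : EpsChainIn f S ε x y) : y ∈ S := by
  obtain ⟨n, c, ⟨-, -, rfl, -⟩, hcS⟩ := h
  exact hcS n le_rfl

theorem ChainRelIn.mem_right (h : ChainRelIn f S x y) : y ∈ S :=
  (h 1 one_pos).mem_right

theorem epsChainIn_of_dist_lt (hx : x ∈ S) (hy : y ∈ S) (hxy : dist (f x) y < ε) :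
    EpsChainIn f S ε x y := by
  refine ⟨1, fun i => if i = 0 then x else y, ⟨le_rfl, rfl, rfl, ?_⟩, ?_⟩
  · intro i hi
    obtain rfl : i = 0 := by omega
    simpa using hxy
  · intro i _
    show (if i = 0 then x else y) ∈ S
    split_ifs
    exacts [hx, hy]

theorem EpsChainIn.snoc (h : EpsChainIn f S ε x y) (hz : z ∈ S) (hyz : dist (f y) z < ε) :
    EpsChainIn f S ε x z := by
  obtain ⟨n, c, ⟨hn, hc0, hcn, hstep⟩, hcS⟩ := h
  have hc : ∀ i ≤ n, Function.update c (n + 1) z i = c i := fun i hi =>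
    Function.update_of_ne (by omega) _ _
  refine ⟨n + 1, Function.update c (n + 1) z,
    ⟨by omega, by rw [hc 0 (by omega), hc0], Function.update_self _ _ _, ?_⟩, ?_⟩
  · intro i hi
    rcases Nat.lt_succ_iff_lt_or_eq.mp hi with hi | rfl
    · rw [hc i hi.le, hc (i + 1) hi]
      exact hstep i hi
    · rw [hc i le_rfl, Function.update_self, hcn]
      exact hyz
  · intro i hi
    rcases Nat.le_succ_iff.mp hi with hi | rfl
    · rw [hc i hi]
      exact hcS i hi
    · rw [Function.update_self]
      exact hz

theorem EpsChainIn.update_right (h : EpsChainIn f S δ x y) (hz : z ∈ S) (hyz : dist y z < η) :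
    EpsChainIn f S (δ + η) x z := by
  obtain ⟨n, c, ⟨hn, hc0, hcn, hstep⟩, hcS⟩ := h
  have hc : ∀ i < n, Function.update c n z i = c i := fun i hi =>
    Function.update_of_ne (by omega) _ _
  refine ⟨n, Function.update c n z,
    ⟨hn, by rw [hc 0 (by omega), hc0], Function.update_self _ _ _, ?_⟩, ?_⟩
  · intro i hi
    rw [hc i hi]
    rcases (show i + 1 ≤ n from hi).lt_or_eq with hi' | hi'
    · rw [hc (i + 1) hi']
      linarith [hstep i hi, dist_nonneg (x := y) (y := z)]
    · rw [hi', Function.update_self]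
      calc dist (f (c i)) z ≤ dist (f (c i)) y + dist y z := dist_triangle _ _ _
        _ < δ + η := by
          have := hstep i hi
          rw [hi', hcn] at this
          gcongr
  · intro i hi
    rcases hi.lt_or_eq with hi | rfl
    · rw [hc i hi]
      exact hcS i hi.le
    · rw [Function.update_self]
      exact hz

theorem chainRelIn_apply (hS : MapsTo f S S) (hx : x ∈ S) : ChainRelIn f S x (f x) :=
  fun _ hε => epsChainIn_of_dist_lt hx (hS hx) (by rwa [dist_self])

theorem mapsTo_setOf_chainRelIn (hS : MapsTo f S S) :
    MapsTo f {y | ChainRelIn f S x y} {y | ChainRelIn f S x y} :=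
  fun y hy ε hε => (hy ε hε).snoc (hS hy.mem_right) (by rwa [dist_self])

theorem isClosed_setOf_chainRelIn (hS : IsClosed S) : IsClosed {y | ChainRelIn f S x y} := by
  refine isClosed_of_closure_subset fun z hz ε hε => ?_
  have hzS : z ∈ S := closure_minimal (fun _ => ChainRelIn.mem_right) hS hz
  obtain ⟨y, hy, hyz⟩ := Metric.mem_closure_iff.mp hz (ε / 2) (half_pos hε)
  rw [← add_halves ε]
  exact (hy (ε / 2) (half_pos hε)).update_right hzS (by rwa [dist_comm])

end Chains

theorem stmt5 [MetricSpace X] [CompactSpace X] [Nonempty X] (f : X → X) :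
    ∃ S : Set X, S.Nonempty ∧ IsClosed S ∧ Set.MapsTo f S S ∧
      InternallyChainTransitive f S := by
  obtain ⟨M, ⟨hMne, hMcl, hMf⟩, hMmin⟩ := exists_minimal_nonempty_isClosed_mapsTo f
  refine ⟨M, hMne, hMcl, hMf, fun x hx y hy => ?_⟩
  exact hMmin ⟨⟨f x, chainRelIn_apply hMf hx⟩, isClosed_setOf_chainRelIn hMcl,
    mapsTo_setOf_chainRelIn hMf⟩ (fun _ => ChainRelIn.mem_right) hy
end

section
/- There exists a map f : [0,1] → [0,1] (necessarily discontinuous) of a compact metric space such that no point x ∈ [0,1] satisfies x Ñ x. Concretely, define f(0) = 3/4, f(x) = x(x + 1/2) for x ∈ (0, 1/2), f(1/2) = 1/4, and f(x) = x/2 + 1/4 for x ∈ (1/2, 1]; then no x ∈ [0,1] satisfies x Ñ x. -/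
open Filter Topology Set

variable {X : Type*}

/-!
On `(0, 1/2)` and on `(1/2, 1]` the map is a self-map with `f y ≤ y`, so every orbit starting
in one of these intervals stays in it and never climbs above its starting point. A point `z`
close to `f x` lies in the interval containing `f x`, and its orbit stays below `z ≈ f x`:
for `x ∈ (0, 1]` we have `f x < x`, so the orbit cannot come back near `x`, while for `x = 0`
the orbit of `z ≈ 3/4` never leaves `(1/2, 1]`.
-/

/-- `ApproxReturn f S x y` is the relation `x Ñ y` for `f` restricted to `S`. -/
def ApproxReturn (f : ℝ → ℝ) (S : Set ℝ) (x y : ℝ) : Prop :=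
  ∀ ε > 0, ∃ k : ℕ, ∃ z ∈ S, dist z (f x) < ε ∧ dist (f^[k] z) y < ε

theorem iterate_le_self_of_mapsTo {α : Type*} [Preorder α] {f : α → α} {I : Set α}
    (hI : MapsTo f I I) (hle : ∀ y ∈ I, f y ≤ y) {z : α} (hz : z ∈ I) (k : ℕ) :
    f^[k] z ≤ z := by
  induction k with
  | zero => rfl
  | succ k ih =>
    rw [Function.iterate_succ_apply']
    exact (hle _ (hI.iterate k hz)).trans ih

theorem not_approxReturn_self_of_mapsTo {f : ℝ → ℝ} {S I : Set ℝ} {x ε : ℝ} (hε : 0 < ε)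
    (hI : MapsTo f I I) (hle : ∀ y ∈ I, f y ≤ y)
    (hnear : ∀ z ∈ S, dist z (f x) < ε → z ∈ I)
    (hfar : ∀ w ∈ I, w < f x + ε → ε ≤ dist w x) :
    ¬ ApproxReturn f S x x := by
  intro h
  obtain ⟨k, z, hzS, hz, hkz⟩ := h ε hε
  have hzI : z ∈ I := hnear z hzS hz
  have hz_lt : z < f x + ε := by
    rw [Real.dist_eq, abs_lt] at hz
    linarith [hz.2]
  refine (hfar _ (hI.iterate k hzI) ?_).not_gt hkz
  exact (iterate_le_self_of_mapsTo hI hle hzI k).trans_lt hz_lt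

noncomputable def fmap (x : ℝ) : ℝ :=
  if x = 0 then 3 / 4 else if x < 1 / 2 then x * (x + 1 / 2) else if x = 1 / 2 then 1 / 4
  else x / 2 + 1 / 4

theorem fmap_zero : fmap 0 = 3 / 4 := by simp [fmap]

theorem fmap_of_mem_Ioo {x : ℝ} (hx : x ∈ Ioo (0 : ℝ) (1 / 2)) : fmap x = x * (x + 1 / 2) := by
  rw [fmap, if_neg hx.1.ne', if_pos hx.2]

theorem fmap_half : fmap (1 / 2) = 1 / 4 := by norm_num [fmap]

theorem fmap_of_mem_Ioc {x : ℝ} (hx : x ∈ Ioc (1 / 2 : ℝ) 1) : fmap x = x / 2 + 1 / 4 := by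
  obtain ⟨h0, h1⟩ := hx
  rw [fmap, if_neg (by linarith), if_neg (by linarith), if_neg (by linarith)]

theorem mapsTo_fmap_Ioo : MapsTo fmap (Ioo (0 : ℝ) (1 / 2)) (Ioo 0 (1 / 2)) := by
  intro x hx
  rw [fmap_of_mem_Ioo hx]
  obtain ⟨h0, h1⟩ := hx
  constructor <;> nlinarith

theorem fmap_lt_of_mem_Ioo {x : ℝ} (hx : x ∈ Ioo (0 : ℝ) (1 / 2)) : fmap x < x := by
  rw [fmap_of_mem_Ioo hx]
  nlinarith [hx.1, hx.2]

theorem mapsTo_fmap_Ioc : MapsTo fmap (Ioc (1 / 2 : ℝ) 1) (Ioc (1 / 2) 1) := by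
  intro x hx
  rw [fmap_of_mem_Ioc hx]
  obtain ⟨h0, h1⟩ := hx
  constructor <;> linarith

theorem fmap_le_of_mem_Ioc {x : ℝ} (hx : x ∈ Ioc (1 / 2 : ℝ) 1) : fmap x ≤ x := by
  rw [fmap_of_mem_Ioc hx]
  linarith [hx.1]

theorem mapsTo_fmap_Icc : MapsTo fmap (Icc (0 : ℝ) 1) (Icc 0 1) := by
  intro x ⟨h0, h1⟩
  rcases h0.eq_or_lt with rfl | h0
  · rw [fmap_zero]; constructor <;> norm_num
  rcases lt_trichotomy x (1 / 2) with hx | rfl | hx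
  · exact Ioo_subset_Icc_self (Ioo_subset_Ioo_right (by norm_num) (mapsTo_fmap_Ioo ⟨h0, hx⟩))
  · rw [fmap_half]; constructor <;> norm_num
  · exact Ioc_subset_Icc_self (Ioc_subset_Ioc_left (by norm_num) (mapsTo_fmap_Ioc ⟨hx, h1⟩))

theorem not_approxReturn_self_of_mapsTo_of_add_le {f : ℝ → ℝ} {S I : Set ℝ} {x ε : ℝ}
    (hε : 0 < ε) (hI : MapsTo f I I) (hle : ∀ y ∈ I, f y ≤ y)
    (hnear : ∀ z ∈ S, dist z (f x) < ε → z ∈ I) (hgap : f x + 2 * ε ≤ x) :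
    ¬ ApproxReturn f S x x := by
  refine not_approxReturn_self_of_mapsTo hε hI hle hnear fun w _ hw => ?_
  rw [Real.dist_eq, abs_sub_comm]
  exact (by linarith : ε ≤ x - w).trans (le_abs_self _)

theorem not_approxReturn_fmap_zero : ¬ ApproxReturn fmap (Icc 0 1) 0 0 := by
  refine not_approxReturn_self_of_mapsTo (ε := 1 / 4) (by norm_num) mapsTo_fmap_Ioc
    (fun _ => fmap_le_of_mem_Ioc) (fun z hz hzx => ?_) (fun w hw _ => ?_)
  · rw [fmap_zero, Real.dist_eq, abs_lt] at hzx
    exact ⟨by linarith [hzx.1], hz.2⟩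
  · rw [Real.dist_eq, sub_zero]
    exact (by linarith [hw.1] : (1 / 4 : ℝ) ≤ w).trans (le_abs_self w)

theorem not_approxReturn_fmap_of_mem_Ioo {x : ℝ} (hx : x ∈ Ioo (0 : ℝ) (1 / 2)) :
    ¬ ApproxReturn fmap (Icc 0 1) x x := by
  have hpos : 0 < fmap x := (mapsTo_fmap_Ioo hx).1
  have hgap : 0 < x - fmap x := sub_pos.2 (fmap_lt_of_mem_Ioo hx)
  have hmin_left := min_le_left (fmap x) (x - fmap x)
  have hmin_right := min_le_right (fmap x) (x - fmap x)
  refine not_approxReturn_self_of_mapsTo_of_add_le (ε := min (fmap x) (x - fmap x) / 2)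
    (by positivity) mapsTo_fmap_Ioo (fun _ hy => (fmap_lt_of_mem_Ioo hy).le) (fun z _ hzx => ?_)
    (by linarith)
  rw [Real.dist_eq, abs_lt] at hzx
  constructor <;> linarith [hzx.1, hzx.2, hx.2]

theorem not_approxReturn_fmap_half : ¬ ApproxReturn fmap (Icc 0 1) (1 / 2) (1 / 2) := by
  refine not_approxReturn_self_of_mapsTo_of_add_le (ε := 1 / 8) (by norm_num) mapsTo_fmap_Ioo
    (fun _ hy => (fmap_lt_of_mem_Ioo hy).le) (fun z _ hzx => ?_) (by norm_num [fmap_half])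
  rw [fmap_half, Real.dist_eq, abs_lt] at hzx
  constructor <;> linarith [hzx.1, hzx.2]

theorem not_approxReturn_fmap_of_mem_Ioc {x : ℝ} (hx : x ∈ Ioc (1 / 2 : ℝ) 1) :
    ¬ ApproxReturn fmap (Icc 0 1) x x := by
  refine not_approxReturn_self_of_mapsTo_of_add_le (ε := (x - 1 / 2) / 4) (by linarith [hx.1])
    mapsTo_fmap_Ioc (fun _ => fmap_le_of_mem_Ioc) (fun z hz hzx => ?_)
    (by rw [fmap_of_mem_Ioc hx]; linarith)
  rw [fmap_of_mem_Ioc hx, Real.dist_eq, abs_lt] at hzx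
  exact ⟨by linarith [hzx.1, hx.1], hz.2⟩

theorem not_approxReturn_fmap {x : ℝ} (hx : x ∈ Icc (0 : ℝ) 1) :
    ¬ ApproxReturn fmap (Icc 0 1) x x := by
  obtain ⟨h0, h1⟩ := hx
  rcases h0.eq_or_lt with rfl | h0
  · exact not_approxReturn_fmap_zero
  rcases lt_trichotomy x (1 / 2) with hx | rfl | hx
  · exact not_approxReturn_fmap_of_mem_Ioo ⟨h0, hx⟩
  · exact not_approxReturn_fmap_half
  · exact not_approxReturn_fmap_of_mem_Ioc ⟨hx, h1⟩

theorem stmt9 : ∃ f : ℝ → ℝ,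
    Set.MapsTo f (Set.Icc 0 1) (Set.Icc 0 1) ∧
    f 0 = 3 / 4 ∧
    (∀ x ∈ Set.Ioo (0 : ℝ) (1 / 2), f x = x * (x + 1 / 2)) ∧
    f (1 / 2) = 1 / 4 ∧
    (∀ x ∈ Set.Ioc (1 / 2 : ℝ) 1, f x = x / 2 + 1 / 4) ∧
    ∀ x ∈ Set.Icc (0 : ℝ) 1,
      ¬ (∀ ε > 0, ∃ k : ℕ, ∃ z ∈ Set.Icc (0 : ℝ) 1,
        dist z (f x) < ε ∧ dist (f^[k] z) x < ε) :=
  ⟨fmap, mapsTo_fmap_Icc, fmap_zero, fun _ => fmap_of_mem_Ioo, fmap_half,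
    fun _ => fmap_of_mem_Ioc, fun _ => not_approxReturn_fmap⟩
end

section
/- Let (X,d) be a compact metric space and f : X → X an arbitrary self-map. If M ⊆ X is internally chain transitive, then M is 𝒞⊆-transitive: for all x, y ∈ M, there exist a non-increasing sequence of positive reals (εₙ) converging to 0 and a family (Cₙ) where each Cₙ is (the set of points of) an εₙ-chain from x to y, with Cₙ ⊆ Cₙ₊₁ for all n. -/
open Filter Topology Set

variable {X : Type*}

/-! Joining consecutive points of an `ε`-chain in `M` by `ε'`-chains inside `M` yields an
`ε'`-chain in `M` through all of its points. Starting from any chain and refining along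
`εₙ = 2⁻ⁿ` gives the nested chains. -/

section Chains

variable [PseudoMetricSpace X] {f : X → X}

theorem IsEpsChain.append {ε : ℝ} {n m : ℕ} {c d : ℕ → X} {x y z : X}
    (hc : IsEpsChain f ε n c x y) (hd : IsEpsChain f ε m d y z) :
    ∃ e, IsEpsChain f ε (n + m) e x z ∧
      e '' Iic (n + m) = c '' Iic n ∪ d '' Iic m := by
  obtain ⟨hn, hc0, hcn, hc⟩ := hc
  obtain ⟨hm, hd0, hdm, hd⟩ := hd
  set e : ℕ → X := fun i => if i ≤ n then c i else d (i - n) with he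
  have e_of_le : ∀ i ≤ n, e i = c i := fun i hi => if_pos hi
  have e_add : ∀ j, e (n + j) = d j := by
    rintro (_ | j)
    · simp [e_of_le, hcn, hd0]
    · simp [he]
  refine ⟨e, ⟨by omega, by simp [e_of_le, hc0], by rw [e_add, hdm], ?_⟩, ?_⟩
  · intro i hi
    rcases Nat.lt_or_ge i n with hin | hni
    · rw [e_of_le i hin.le, e_of_le (i + 1) hin]
      exact hc i hin
    · obtain ⟨j, rfl⟩ := Nat.exists_eq_add_of_le hni
      rw [e_add, add_assoc, e_add]
      exact hd j (by omega)
  · ext p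
    simp only [mem_image, mem_union, mem_Iic]
    constructor
    · rintro ⟨i, hi, rfl⟩
      rcases le_or_gt i n with hin | hni
      · exact Or.inl ⟨i, hin, (e_of_le i hin).symm⟩
      · obtain ⟨j, rfl⟩ := Nat.exists_eq_add_of_le hni.le
        exact Or.inr ⟨j, by omega, (e_add j).symm⟩
    · rintro (⟨i, hi, rfl⟩ | ⟨j, hj, rfl⟩)
      · exact ⟨i, by omega, e_of_le i hi⟩
      · exact ⟨n + j, by omega, e_add j⟩

variable {M : Set X}

theorem InternallyChainTransitive.exists_chain_image_subset
    (hM : InternallyChainTransitive f M) {ε : ℝ} (hε : 0 < ε) (c : ℕ → X) (k : ℕ)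
    (hc : c '' Iic k ⊆ M) :
    ∃ n c', IsEpsChain f ε n c' (c 0) (c k) ∧ c' '' Iic n ⊆ M ∧ c '' Iic k ⊆ c' '' Iic n := by
  have hcM : ∀ i ≤ k, c i ∈ M := fun i hi => hc (mem_image_of_mem c hi)
  induction k with
  | zero =>
    -- A loop from `c 0` to itself in `M` passes through `c 0`.
    obtain ⟨n, c', hc', hc'M⟩ := hM (c 0) (hcM 0 le_rfl) (c 0) (hcM 0 le_rfl) ε hε
    refine ⟨n, c', hc', image_subset_iff.2 hc'M, ?_⟩
    rintro _ ⟨i, hi, rfl⟩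
    obtain rfl : i = 0 := Nat.le_zero.1 hi
    exact ⟨0, mem_Iic.2 (Nat.zero_le n), hc'.2.1⟩
  | succ k ih =>
    obtain ⟨n, c', hc', hc'M, hsub⟩ :=
      ih ((image_mono (Iic_subset_Iic.2 k.le_succ)).trans hc) fun i hi => hcM i (by omega)
    obtain ⟨m, d, hd, hdM⟩ := hM (c k) (hcM k k.le_succ) (c (k + 1)) (hcM _ le_rfl) ε hε
    obtain ⟨e, he, he_image⟩ := hc'.append hd
    refine ⟨n + m, e, he, he_image ▸ union_subset hc'M (image_subset_iff.2 hdM), ?_⟩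
    rw [he_image]
    rintro _ ⟨i, hi, rfl⟩
    rcases (mem_Iic.1 hi).lt_or_eq with hik | rfl
    · exact Or.inl (hsub ⟨i, mem_Iic.2 (Nat.le_of_lt_succ hik), rfl⟩)
    · exact Or.inr ⟨m, mem_Iic.2 le_rfl, hd.2.2.1⟩

theorem InternallyChainTransitive.exists_nested_chains
    (hM : InternallyChainTransitive f M) {x y : X} (hx : x ∈ M) (hy : y ∈ M)
    {ε : ℕ → ℝ} (hε : ∀ n, 0 < ε n) :
    ∃ (N : ℕ → ℕ) (c : ℕ → ℕ → X), ∀ n,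
      (IsEpsChain f (ε n) (N n) (c n) x y ∧ c n '' Iic (N n) ⊆ M) ∧
        c n '' Iic (N n) ⊆ c (n + 1) '' Iic (N (n + 1)) := by
  let P (n : ℕ) (p : ℕ × (ℕ → X)) : Prop := IsEpsChain f (ε n) p.1 p.2 x y ∧ p.2 '' Iic p.1 ⊆ M
  have refine_step : ∀ n p, P n p → ∃ q, P (n + 1) q ∧ p.2 '' Iic p.1 ⊆ q.2 '' Iic q.1 := by
    rintro n ⟨k, c⟩ ⟨hc, hcM⟩
    obtain ⟨m, d, hd, hdM, hsub⟩ := hM.exists_chain_image_subset (hε (n + 1)) c k hcM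
    exact ⟨(m, d), ⟨hc.2.1 ▸ hc.2.2.1 ▸ hd, hdM⟩, hsub⟩
  choose! next hnext using refine_step
  obtain ⟨k₀, c₀, hc₀, hc₀M⟩ := hM x hx y hy (ε 0) (hε 0)
  let seq (n : ℕ) : ℕ × (ℕ → X) := Nat.rec (k₀, c₀) next n
  have hseq : ∀ n, P n (seq n) := by
    intro n
    induction n with
    | zero => exact ⟨hc₀, image_subset_iff.2 hc₀M⟩
    | succ n ih => exact (hnext n _ ih).1
  exact ⟨fun n => (seq n).1, fun n => (seq n).2, fun n => ⟨hseq n, (hnext n _ (hseq n)).2⟩⟩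

theorem InternallyChainTransitive.nestedChainRelIn
    (hM : InternallyChainTransitive f M) {x y : X} (hx : x ∈ M) (hy : y ∈ M) :
    NestedChainRelIn f M x y := by
  have hε : ∀ n, 0 < (1 / 2 : ℝ) ^ n := fun n => by positivity
  obtain ⟨N, c, hc⟩ := hM.exists_nested_chains hx hy hε
  refine ⟨_, hε, fun a b hab => pow_le_pow_of_le_one (by norm_num) (by norm_num) hab,
    tendsto_pow_atTop_nhds_zero_of_lt_one (by norm_num) (by norm_num), N, c,
    fun n => ⟨(hc n).1.1, fun i hi => (hc n).1.2 (mem_image_of_mem _ hi)⟩, fun n => (hc n).2⟩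

theorem NestedChainRelIn.nestedChainRel {S : Set X} {x y : X} (h : NestedChainRelIn f S x y) :
    NestedChainRel f x y := by
  obtain ⟨ε, hε, hanti, hlim, N, c, hc, hsub⟩ := h
  exact ⟨ε, hε, hanti, hlim, N, c, fun n => (hc n).1, hsub⟩

end Chains

theorem stmt11_general [MetricSpace X] (f : X → X) (M : Set X)
    (hM : InternallyChainTransitive f M) :
    ∀ x ∈ M, ∀ y ∈ M, NestedChainRel f x y :=
  fun _ hx _ hy => (hM.nestedChainRelIn hx hy).nestedChainRel

theorem stmt11 [MetricSpace X] [CompactSpace X] (f : X → X) (M : Set X)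
    (hM : InternallyChainTransitive f M) :
    ∀ x ∈ M, ∀ y ∈ M, NestedChainRel f x y :=
  stmt11_general f M hM
end

section
/- Let (X,d) be a compact metric space and f : X → X an arbitrary self-map. If X itself is chain-transitive (x 𝒞 y for all x, y ∈ X), then the nested-chain relation coincides with the chain relation: 𝒞⊆ = 𝒞 = X × X. -/
open Filter Topology Set

variable {X : Type*}

section ChainConstruction
variable [PseudoMetricSpace X] {f : X → X} {ε : ℝ}

theorem IsEpsChain.append_s14 {n₁ n₂ : ℕ} {c₁ c₂ : ℕ → X} {a b d : X}
    (h₁ : IsEpsChain f ε n₁ c₁ a b) (h₂ : IsEpsChain f ε n₂ c₂ b d) :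
    ∃ c, IsEpsChain f ε (n₁ + n₂) c a d ∧
      c₁ '' Iic n₁ ⊆ c '' Iic (n₁ + n₂) ∧ c₂ '' Iic n₂ ⊆ c '' Iic (n₁ + n₂) := by
  obtain ⟨hn₁, rfl, rfl, hs₁⟩ := h₁
  obtain ⟨-, hc₂0, rfl, hs₂⟩ := h₂
  let c : ℕ → X := fun i => if i ≤ n₁ then c₁ i else c₂ (i - n₁)
  have left : ∀ i ≤ n₁, c i = c₁ i := fun i hi => if_pos hi
  have right : ∀ i, n₁ ≤ i → c i = c₂ (i - n₁) := by
    intro i hi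
    rcases hi.eq_or_lt with rfl | hlt
    · simp [c, hc₂0]
    · exact if_neg hlt.not_ge
  refine ⟨c, ⟨by omega, left 0 (Nat.zero_le _), by simp [right (n₁ + n₂) (by omega)], ?_⟩,
    ?_, ?_⟩
  · intro i hi
    by_cases h : i < n₁
    · rw [left i h.le, left (i + 1) h]
      exact hs₁ i h
    · rw [right i (by omega), right (i + 1) (by omega), show i + 1 - n₁ = i - n₁ + 1 by omega]
      exact hs₂ _ (by omega)
  · rintro _ ⟨i, hi, rfl⟩
    exact ⟨i, mem_Iic.mpr (by simp at hi; omega), left i hi⟩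
  · rintro _ ⟨j, hj, rfl⟩
    refine ⟨n₁ + j, mem_Iic.mpr (by simp at hj; omega), ?_⟩
    rw [right (n₁ + j) (by omega), Nat.add_sub_cancel_left]

theorem exists_isEpsChain_image_superset (h : ∀ x y, EpsChain f ε x y) (N₀ : ℕ) (c₀ : ℕ → X) :
    ∃ N c, IsEpsChain f ε N c (c₀ 0) (c₀ N₀) ∧ c₀ '' Iic N₀ ⊆ c '' Iic N := by
  induction N₀ with
  | zero =>
    obtain ⟨n, c, hc⟩ := h (c₀ 0) (c₀ 0)
    refine ⟨n, c, hc, ?_⟩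
    rintro _ ⟨i, hi, rfl⟩
    obtain rfl : i = 0 := Nat.le_zero.mp hi
    exact ⟨0, mem_Iic.mpr (Nat.zero_le _), hc.2.1⟩
  | succ m ih =>
    obtain ⟨n₁, c₁, h₁, hsub₁⟩ := ih
    obtain ⟨n₂, c₂, h₂⟩ := h (c₀ m) (c₀ (m + 1))
    obtain ⟨c, hc, hsub₁', hsub₂⟩ := h₁.append_s14 h₂
    refine ⟨n₁ + n₂, c, hc, ?_⟩
    rintro _ ⟨i, hi, rfl⟩
    rcases Nat.le_succ_iff.mp (mem_Iic.mp hi) with hi | rfl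
    · exact hsub₁' (hsub₁ ⟨i, mem_Iic.mpr hi, rfl⟩)
    · exact hsub₂ ⟨n₂, mem_Iic.mpr le_rfl, h₂.2.2.1⟩

/-- Start from a `1`-chain and, at step `n + 1`, join consecutive points of the previous chain
by `1/(n+2)`-chains; each new chain then contains the previous one. -/
theorem nestedChainRel_of_forall_epsChain (h : ∀ ε > 0, ∀ x y, EpsChain f ε x y) (x y : X) :
    NestedChainRel f x y := by
  let ε : ℕ → ℝ := fun n => 1 / ((n : ℝ) + 1)
  have hε : ∀ n, 0 < ε n := fun _ => Nat.one_div_pos_of_nat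
  choose N c hchain hsub using fun n =>
    exists_isEpsChain_image_superset (h (ε (n + 1)) (hε (n + 1)))
  obtain ⟨N₀, c₀, h₀⟩ := h (ε 0) (hε 0) x y
  let chains : ℕ → ℕ × (ℕ → X) := fun n =>
    n.rec (N₀, c₀) fun n p => (N n p.1 p.2, c n p.1 p.2)
  have hchains : ∀ n, IsEpsChain f (ε n) (chains n).1 (chains n).2 x y := by
    intro n
    induction n with
    | zero => exact h₀
    | succ m ih =>
      have := hchain m (chains m).1 (chains m).2
      rwa [ih.2.1, ih.2.2.1] at this
  exact ⟨ε, hε, fun _ _ hab => Nat.one_div_le_one_div hab,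
    tendsto_one_div_add_atTop_nhds_zero_nat, fun n => (chains n).1, fun n => (chains n).2,
    hchains, fun n => hsub n _ _⟩

end ChainConstruction

theorem stmt14_general [MetricSpace X] (f : X → X)
    (hC : ∀ x y : X, ChainRel f x y) :
    (∀ x y : X, NestedChainRel f x y) ∧ (∀ x y : X, ChainRel f x y) :=
  ⟨nestedChainRel_of_forall_epsChain fun ε hε x y => hC x y ε hε, hC⟩

theorem stmt14 [MetricSpace X] [CompactSpace X] (f : X → X)
    (hC : ∀ x y : X, ChainRel f x y) :
    (∀ x y : X, NestedChainRel f x y) ∧ (∀ x y : X, ChainRel f x y) :=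
  stmt14_general f hC
end

section
/- There exists a subshift Σ of the full shift on {0,1}^ℕ (with the shift map σ, which is continuous) and points u = 1^∞, v = 0^∞ ∈ Σ such that u 𝒞 v but not u 𝒞⊆ v. Concretely, Σ is the closure of the set {σ^j(1^k 0^k 1^∞) : j ≥ 0, k ≥ 1}, i.e., Σ = {σ^j(1^k 0^k 1^∞)} ∪ {1^∞, 0^∞}, with metric d(u,v) = 2^{-(n-1)} where n is the first index at which u and v differ. -/
open Filter Topology Set

variable {X : Type*}

/-- The full shift on `{0,1}^ℕ`. -/
def shift (u : ℕ → Bool) : ℕ → Bool := fun n => u (n + 1)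

/-- The word `1^k 0^k 1^∞`. -/
def wrd (k : ℕ) : ℕ → Bool := fun n => if n < k then true else if n < 2 * k then false else true

def ones : ℕ → Bool := fun _ => true

def zeros : ℕ → Bool := fun _ => false

/-- The subshift `Σ = {σ^j(1^k 0^k 1^∞) : j ≥ 0, k ≥ 1} ∪ {1^∞, 0^∞}`. -/
def Sig : Set (ℕ → Bool) :=
  {w | ∃ j k, 1 ≤ k ∧ w = shift^[j] (wrd k)} ∪ {ones, zeros}

/-- The metric `dist u v = (1/2)^(first index where u,v differ)`, i.e. `2^{-(n-1)}` for the
first 1-based index `n` at which `u` and `v` differ. -/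
noncomputable local instance : MetricSpace (ℕ → Bool) := PiNat.metricSpace

/-!
Every `ε`-chain from `1^∞` to `0^∞` has to leave `1^∞` at some step, and for `ε < 1` the first
point after leaving still starts with `1`, so it is some `σ^j(1^k 0^k 1^∞)` with `j < k`. Once
`ε < 2^{-2k}`, a point of `Σ` whose image is `ε`-close to `σ^j(1^k 0^k 1^∞)` must be
`σ^{j-1}(1^k 0^k 1^∞)`, and nothing is `ε`-close to `1^k 0^k 1^∞` itself. Hence no fine chain
starting at `1^∞` can visit that point, so chains cannot be nested. Chains do exist: go from
`1^∞` to `1^k 0^k 1^∞`, follow its orbit to `0^k 1^∞`, then jump to `0^∞`.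
-/

theorem exists_eq_and_succ_ne {α : Type*} {c : ℕ → α} {x : α} :
    ∀ {n : ℕ}, c 0 = x → c n ≠ x → ∃ i < n, c i = x ∧ c (i + 1) ≠ x
  | 0, h0, hn => absurd h0 hn
  | n + 1, h0, hn => by
    by_cases hcn : c n = x
    · exact ⟨n, n.lt_succ_self, hcn, hn⟩
    · obtain ⟨i, hi, hci⟩ := exists_eq_and_succ_ne h0 hcn
      exact ⟨i, by omega, hci⟩

section Chains

variable [PseudoMetricSpace X]

theorem IsEpsChain.notMem_of_backward_closed {f : X → X} {S P : Set X} {ε : ℝ} {n : ℕ}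
    {c : ℕ → X} {x y : X} (hc : IsEpsChain f ε n c x y) (hS : ∀ i ≤ n, c i ∈ S) (hx : x ∉ P)
    (hP : ∀ q ∈ S, ∀ p ∈ P, dist (f q) p < ε → q ∈ P) : ∀ i ≤ n, c i ∉ P := by
  intro i
  induction i with
  | zero => exact fun _ => hc.2.1 ▸ hx
  | succ i ih =>
    exact fun hi hmem =>
      ih (by omega) (hP _ (hS i (by omega)) _ hmem (hc.2.2.2 i (by omega)))

end Chains

theorem shift_iterate_apply (u : ℕ → Bool) (j n : ℕ) : shift^[j] u n = u (n + j) := by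
  induction j generalizing u with
  | zero => rfl
  | succ j ih => exact ih (shift u)

theorem wrd_eq_true_iff {k m : ℕ} : wrd k m = true ↔ m < k ∨ 2 * k ≤ m := by
  unfold wrd
  split_ifs <;> simp <;> omega

theorem continuous_shift : Continuous shift :=
  continuous_pi fun n => continuous_apply (n + 1)

theorem ones_mem_Sig : ones ∈ Sig := Or.inr (Or.inl rfl)

theorem zeros_mem_Sig : zeros ∈ Sig := Or.inr (Or.inr rfl)

theorem mapsTo_shift_Sig : MapsTo shift Sig Sig := by
  rintro w (⟨j, k, hk, rfl⟩ | rfl | rfl)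
  · exact Or.inl ⟨j + 1, k, hk, (Function.iterate_succ_apply' shift j (wrd k)).symm⟩
  · exact ones_mem_Sig
  · exact zeros_mem_Sig

theorem dist_le_of_forall_lt_eq {u v : ℕ → Bool} {m : ℕ} (h : ∀ i < m, u i = v i) :
    dist u v ≤ (1 / 2 : ℝ) ^ m :=
  PiNat.mem_cylinder_iff_dist_le.mp h

def wrdChain (k : ℕ) (i : ℕ) : ℕ → Bool :=
  if i = 0 then ones else if i ≤ k then shift^[i - 1] (wrd k) else zeros

theorem wrdChain_isEpsChain {k : ℕ} {ε : ℝ} (hε : 0 < ε) (hk₀ : k ≠ 0)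
    (hk : (1 / 2 : ℝ) ^ k < ε) :
    IsEpsChain shift ε (k + 1) (wrdChain k) ones zeros := by
  refine ⟨by omega, by simp [wrdChain], by simp [wrdChain], fun i hi => ?_⟩
  rcases Nat.eq_zero_or_pos i with rfl | hi0
  · simp only [wrdChain, show (0 + 1 ≠ 0) from one_ne_zero, if_false,
      show 0 + 1 ≤ k by omega, if_true, Nat.sub_self, Function.iterate_zero, id]
    refine (dist_le_of_forall_lt_eq fun n hn => ?_).trans_lt hk
    exact (wrd_eq_true_iff.mpr (Or.inl hn)).symm
  · have hsucc : shift (shift^[i - 1] (wrd k)) = shift^[i] (wrd k) := by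
      rw [← Function.iterate_succ_apply' shift]
      congr 1
      omega
    rcases Nat.lt_or_ge i k with hik | hik
    · simp only [wrdChain, hi0.ne', if_false, hik.le, show i + 1 ≠ 0 by omega,
        show i + 1 ≤ k by omega, if_true, Nat.add_sub_cancel, hsucc, dist_self, hε]
    · obtain rfl : i = k := by omega
      simp only [wrdChain, hi0.ne', if_false, le_rfl, if_true, show i + 1 ≠ 0 by omega,
        show ¬ i + 1 ≤ i by omega, hsucc]
      refine (dist_le_of_forall_lt_eq fun n _ => ?_).trans_lt hk
      simp [shift_iterate_apply, wrd, zeros]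
      omega

theorem wrdChain_mem_Sig (k i : ℕ) : wrdChain k i ∈ Sig := by
  unfold wrdChain
  split_ifs with h0 hk
  · exact ones_mem_Sig
  · exact Or.inl ⟨i - 1, k, by omega, rfl⟩
  · exact zeros_mem_Sig

theorem chainRelIn_ones_zeros : ChainRelIn shift Sig ones zeros := by
  intro ε hε
  obtain ⟨k, hk⟩ := exists_pow_lt_of_lt_one hε (by norm_num : (1 / 2 : ℝ) < 1)
  have hk' : (1 / 2 : ℝ) ^ (k + 1) < ε :=
    (pow_le_pow_of_le_one (by norm_num) (by norm_num) k.le_succ).trans_lt hk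
  exact ⟨k + 2, wrdChain (k + 1), wrdChain_isEpsChain hε k.succ_ne_zero hk',
    fun i _ => wrdChain_mem_Sig (k + 1) i⟩

def orbitHead (k : ℕ) : Set (ℕ → Bool) :=
  {w | ∃ j < k, w = shift^[j] (wrd k)}

theorem ones_notMem_orbitHead (k : ℕ) : ones ∉ orbitHead k := by
  rintro ⟨j, hj, hw⟩
  have := congrFun hw (k - j)
  simp [ones, shift_iterate_apply, wrd, show k - j + j = k by omega] at this
  omega

theorem mem_orbitHead_of_head_eq_true {w : ℕ → Bool} (hw : w ∈ Sig) (hne : w ≠ ones)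
    (h0 : w 0 = true) : ∃ k, w ∈ orbitHead k := by
  rcases hw with ⟨j, k, -, rfl⟩ | rfl | rfl
  · refine ⟨k, j, ?_, rfl⟩
    have hj : ¬ 2 * k ≤ j := fun hj =>
      hne (funext fun n => by simp [shift_iterate_apply, wrd, ones]; omega)
    rw [shift_iterate_apply, wrd_eq_true_iff] at h0
    omega
  · exact absurd rfl hne
  · exact absurd h0 (by simp [zeros])

/-- The first `2k + 1` symbols of `σ^j(1^k 0^k 1^∞)` force a preimage in `Σ` to be
`σ^(j-1)(1^k 0^k 1^∞)`; in particular `1^k 0^k 1^∞` has none. -/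
theorem mem_orbitHead_of_shift_agree {q : ℕ → Bool} {j k : ℕ} (hq : q ∈ Sig) (hj : j < k)
    (h : ∀ n ≤ 2 * k, shift q n = shift^[j] (wrd k) n) : q ∈ orbitHead k := by
  rcases hq with ⟨j', k', -, rfl⟩ | rfl | rfl
  · have key : ∀ n ≤ 2 * k,
        (n + (j' + 1) < k' ∨ 2 * k' ≤ n + (j' + 1)) ↔ (n + j < k ∨ 2 * k ≤ n + j) := by
      intro n hn
      have e := h n hn
      rw [← Function.iterate_succ_apply' shift, shift_iterate_apply, shift_iterate_apply] at e
      rw [← wrd_eq_true_iff, ← wrd_eq_true_iff, e]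
    have := key (k - j - 1) (by omega)
    have := key (k - j) (by omega)
    have := key (2 * k - j - 1) (by omega)
    have := key (2 * k - j) (by omega)
    obtain rfl : k' = k := by omega
    exact ⟨j', by omega, rfl⟩
  · have e := h (k - j) (by omega)
    simp [shift, ones, shift_iterate_apply, wrd, show k - j + j = k by omega] at e
    omega
  · have e := h (2 * k - j) (by omega)
    simp [shift, zeros, shift_iterate_apply, wrd, show 2 * k - j + j = 2 * k by omega] at e

theorem mem_orbitHead_of_dist_shift_lt {q p : ℕ → Bool} {k : ℕ} (hq : q ∈ Sig)
    (hp : p ∈ orbitHead k) (h : dist (shift q) p < (1 / 2 : ℝ) ^ (2 * k)) : q ∈ orbitHead k := by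
  obtain ⟨j, hj, rfl⟩ := hp
  exact mem_orbitHead_of_shift_agree hq hj fun n hn => PiNat.apply_eq_of_dist_lt h hn

theorem not_nestedChainRelIn_ones_zeros : ¬ NestedChainRelIn shift Sig ones zeros := by
  rintro ⟨ε, -, -, hε, N, c, hchain, hnest⟩
  have hmono : Monotone fun n => c n '' Iic (N n) := monotone_nat_of_le_succ hnest
  obtain ⟨n₀, hn₀⟩ := (hε.eventually (gt_mem_nhds (by norm_num : (0 : ℝ) < (1 / 2) ^ 0))).exists
  obtain ⟨⟨-, h0, hN, hjump⟩, hmem⟩ := hchain n₀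
  have hlast : c n₀ (N n₀) ≠ ones := by
    rw [hN]
    intro h
    simpa [ones, zeros] using congrFun h 0
  obtain ⟨i, hi, hci, hexit⟩ := exists_eq_and_succ_ne h0 hlast
  have hstep : dist ones (c n₀ (i + 1)) < (1 / 2 : ℝ) ^ 0 := by
    have := (hjump i hi).trans hn₀
    rwa [hci, show shift ones = ones from rfl] at this
  obtain ⟨k, hk⟩ := mem_orbitHead_of_head_eq_true (hmem (i + 1) hi) hexit
    (PiNat.apply_eq_of_dist_lt hstep le_rfl).symm
  obtain ⟨n₁, hn₁, hn₀₁⟩ := ((hε.eventually (gt_mem_nhds (by positivity :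
    (0 : ℝ) < (1 / 2) ^ (2 * k)))).and (eventually_ge_atTop n₀)).exists
  obtain ⟨l, hl, hcl⟩ := hmono hn₀₁ ⟨i + 1, mem_Iic.mpr hi, rfl⟩
  obtain ⟨hc₁, hmem₁⟩ := hchain n₁
  exact hc₁.notMem_of_backward_closed hmem₁ (ones_notMem_orbitHead k)
    (fun q hq p hp hd => mem_orbitHead_of_dist_shift_lt hq hp (hd.trans hn₁)) l hl (hcl ▸ hk)

theorem stmt16 :
    Continuous shift ∧ Set.MapsTo shift Sig Sig ∧ ones ∈ Sig ∧ zeros ∈ Sig ∧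
    ChainRelIn shift Sig ones zeros ∧ ¬ NestedChainRelIn shift Sig ones zeros :=
  ⟨continuous_shift, mapsTo_shift_Sig, ones_mem_Sig, zeros_mem_Sig, chainRelIn_ones_zeros,
    not_nestedChainRelIn_ones_zeros⟩
end

section
/- Consider the circle rotation on a finite set: S = {0, 1, …, n−1} with f(x) = (x+1) mod n, n ≥ 2, viewed as a compact (discrete) metric space. Every proper nonempty subset M ⊊ S is 𝒞⊆-transitive (indeed 𝒞-transitive) but not internally chain transitive. Hence chain-transitivity does not imply internal chain transitivity. -/
open Filter Topology Set

variable {X : Type*}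

/-!
Exact orbit segments are `ε`-chains for every `ε > 0`, and the rotation carries any point to any
other in at least one step, so any two points are chain related, even by one fixed chain, which
makes the nested condition trivial. In a finite metric space, on the other hand, an `ε`-chain with
`ε` below the least positive distance is an exact orbit segment. Hence an internally chain
transitive set is forward invariant, and the only nonempty forward-invariant subset of a cyclic
rotation is the whole space.
-/

open Fin.NatCast

theorem DiscreteUniformity.exists_pos_forall_dist_lt_imp_eq [PseudoMetricSpace X]
    [DiscreteUniformity X] : ∃ δ > 0, ∀ a b : X, dist a b < δ → a = b :=
  Metric.mem_uniformity_dist.mp (DiscreteUniformity.relId_mem_uniformity X)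

section Orbit
variable [PseudoMetricSpace X] {f : X → X} {x y : X} {m : ℕ}

theorem isEpsChain_iterate (hm : 1 ≤ m) (hy : f^[m] x = y) {ε : ℝ} (hε : 0 < ε) :
    IsEpsChain f ε m (fun i => f^[i] x) x y := by
  refine ⟨hm, rfl, hy, fun i _ => ?_⟩
  simpa only [Function.iterate_succ_apply', dist_self] using hε

theorem chainRel_of_iterate (hm : 1 ≤ m) (hy : f^[m] x = y) : ChainRel f x y :=
  fun _ hε => ⟨m, _, isEpsChain_iterate hm hy hε⟩

theorem nestedChainRel_of_iterate (hm : 1 ≤ m) (hy : f^[m] x = y) :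
    NestedChainRel f x y :=
  ⟨fun k => (1 / 2 : ℝ) ^ k, fun _ => by positivity,
    fun _ _ h => pow_le_pow_of_le_one (by norm_num) (by norm_num) h,
    tendsto_pow_atTop_nhds_zero_of_lt_one (by norm_num) (by norm_num),
    fun _ => m, fun _ i => f^[i] x, fun _ => isEpsChain_iterate hm hy (by positivity),
    fun _ => subset_rfl⟩

theorem InternallyChainTransitive.mapsTo {S : Set X} (hS : InternallyChainTransitive f S)
    {δ : ℝ} (hδ : 0 < δ) (hdisc : ∀ a b : X, dist a b < δ → a = b) : MapsTo f S S := by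
  intro x hx
  obtain ⟨m, c, ⟨hm, hc0, -, hstep⟩, hcS⟩ := hS x hx x hx δ hδ
  have hc1 : f x = c 1 := hc0 ▸ hdisc _ _ (hstep 0 hm)
  exact hc1 ▸ hcS 1 hm

end Orbit

section Rotation
variable {m : ℕ} [NeZero m]

theorem Fin.add_one_iterate (x : Fin m) (k : ℕ) : (fun z : Fin m => z + 1)^[k] x = x + k := by
  rw [add_right_iterate_apply, nsmul_one]

theorem Fin.exists_add_one_iterate_eq (x y : Fin m) :
    ∃ k, 1 ≤ k ∧ (fun z : Fin m => z + 1)^[k] x = y := by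
  refine ⟨(y - x).val + m, by have := NeZero.pos m; omega, ?_⟩
  rw [Fin.add_one_iterate, Nat.cast_add, Fin.cast_val_eq_self, Fin.natCast_self, add_zero,
    add_sub_cancel]

theorem Fin.eq_univ_of_mapsTo_add_one {M : Set (Fin m)} (hM : MapsTo (· + 1) M M)
    (hne : M.Nonempty) : M = univ := by
  obtain ⟨x, hx⟩ := hne
  refine eq_univ_of_forall fun y => ?_
  obtain ⟨k, -, rfl⟩ := Fin.exists_add_one_iterate_eq x y
  exact hM.iterate k hx

end Rotation

theorem stmt19 (n : ℕ) [MetricSpace (Fin (n + 2))] (M : Set (Fin (n + 2)))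
    (hne : M.Nonempty) (hproper : M ≠ Set.univ) :
    (∀ x ∈ M, ∀ y ∈ M, NestedChainRel (fun z : Fin (n + 2) => z + 1) x y) ∧
    (∀ x ∈ M, ∀ y ∈ M, ChainRel (fun z : Fin (n + 2) => z + 1) x y) ∧
    ¬ InternallyChainTransitive (fun z : Fin (n + 2) => z + 1) M := by
  refine ⟨fun x _ y _ => ?_, fun x _ y _ => ?_, fun hM => hproper ?_⟩
  · obtain ⟨k, hk, hxy⟩ := Fin.exists_add_one_iterate_eq x y
    exact nestedChainRel_of_iterate hk hxy
  · obtain ⟨k, hk, hxy⟩ := Fin.exists_add_one_iterate_eq x y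
    exact chainRel_of_iterate hk hxy
  · obtain ⟨δ, hδ, hdisc⟩ := DiscreteUniformity.exists_pos_forall_dist_lt_imp_eq (X := Fin (n + 2))
    exact Fin.eq_univ_of_mapsTo_add_one (hM.mapsTo hδ hdisc) hne
end
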